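/- arXiv:1908.00585 — 10 statements merged into one kernel-verified Lean document; each statement's English description precedes it below -/
import Mathlib

section
/- Let Ω ⊆ ℝⁿ be open, let f : Ω → ℝⁿ and A, B, M, N : Ω → ℝ be C¹, and define p(u) = (1, u¹, …, uⁿ, B(u), N(u), 0) and r(u) = (0, f¹(u), …, fⁿ(u), A(u), M(u), 1) in ℝ^{n+4}. If for every u ∈ Ω and every i the vector ∂r/∂uⁱ(u) lies in the linear span of {p(u), r(u), ∂p/∂u¹(u), …, ∂p/∂uⁿ(u)} (stability of tangent spaces along generators), then the conservation-law relations hold: ∂A/∂uⁱ = Σ_k (∂B/∂u^k)(∂f^k/∂uⁱ) and ∂M/∂uⁱ = Σ_k (∂N/∂u^k)(∂f^k/∂uⁱ) on Ω, i.e., B dx + A dt and N dx + M dt are additional conservation laws of the system with flux f. -/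
/-!
Write `∂ᵢr = α p + β r + Σₗ cₗ ∂ₗp`. The first and last coordinates of `∂ᵢr` and of every
`∂ₗp` vanish, while those of `p` and `r` are `(1, 0)` and `(0, 1)`; hence `α = β = 0`.
The `u`-block of `∂ₗp` is the basis vector `eₗ`, so comparing `u`-blocks gives `cₗ = ∂ᵢfˡ`,
and comparing the `B`- and `N`-coordinates gives the two conservation-law relations.
-/

open Finset

theorem fderiv_tuple_apply {𝕜 E F G H : Type*} [NontriviallyNormedField 𝕜]
    [NormedAddCommGroup E] [NormedSpace 𝕜 E] [NormedAddCommGroup F] [NormedSpace 𝕜 F]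
    [NormedAddCommGroup G] [NormedSpace 𝕜 G] [NormedAddCommGroup H] [NormedSpace 𝕜 H]
    {g : E → F} {a : E → G} {m : E → H} {x : E}
    (hg : DifferentiableAt 𝕜 g x) (ha : DifferentiableAt 𝕜 a x) (hm : DifferentiableAt 𝕜 m x)
    (s t : 𝕜) (v : E) :
    fderiv 𝕜 (fun y => (s, g y, a y, m y, t)) x v =
      (0, fderiv 𝕜 g x v, fderiv 𝕜 a x v, fderiv 𝕜 m x v, 0) := by
  rw [(hasFDerivAt_const s x).prodMk (hg.hasFDerivAt.prodMk (ha.hasFDerivAt.prodMk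
    (hm.hasFDerivAt.prodMk (hasFDerivAt_const t x)))) |>.fderiv]
  rfl

theorem eq_sum_mul_of_mem_span_ruledTangent {R : Type*} [CommRing R] {n : ℕ}
    {x y v : Fin n → R} {b c a' m' a m : R} {β ν : Fin n → R}
    (h : ((0 : R), v, a, m, (0 : R)) ∈ Submodule.span R
      ({((1 : R), x, b, c, (0 : R)), ((0 : R), y, a', m', (1 : R))} ∪
        Set.range fun l => ((0 : R), Pi.single l 1, β l, ν l, (0 : R)))) :
    a = ∑ k, β k * v k ∧ m = ∑ k, ν k * v k := by
  rw [Submodule.span_union, Submodule.mem_sup] at h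
  obtain ⟨_, hpr, _, hgen, heq⟩ := h
  obtain ⟨s, t, rfl⟩ := Submodule.mem_span_pair.1 hpr
  obtain ⟨coeff, rfl⟩ := (Submodule.mem_span_range_iff_exists_fun R).1 hgen
  simp only [Prod.ext_iff, Prod.fst_add, Prod.snd_add, Prod.smul_fst, Prod.smul_snd,
    Prod.fst_sum, Prod.snd_sum, smul_eq_mul] at heq
  obtain ⟨hs, hv, ha, hm, ht⟩ := heq
  simp only [mul_one, mul_zero, sum_const_zero, add_zero, zero_add] at hs ht
  subst hs ht
  have hcoeff : coeff = v := by
    funext k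
    simpa [Finset.sum_apply, Pi.single_apply] using congrFun hv k
  subst hcoeff
  simp only [zero_mul, zero_add] at ha hm
  exact ⟨by rw [← ha]; simp only [mul_comm], by rw [← hm]; simp only [mul_comm]⟩

/-- Conversely, if the tangent spaces to the ruled hypersurface of
a system of conservation laws are stable along the line generators — i.e. every
partial derivative `∂r/∂uⁱ(u)` lies in the span of
`{p(u), r(u), ∂p/∂u¹(u), …, ∂p/∂uⁿ(u)}`, where `p(u) = (1, u, B(u), N(u), 0)`
and `r(u) = (0, f(u), A(u), M(u), 1)` — then the conservation-law relations
`∂A/∂uⁱ = Σ_k (∂B/∂u^k)(∂f^k/∂uⁱ)` and `∂M/∂uⁱ = Σ_k (∂N/∂u^k)(∂f^k/∂uⁱ)`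
hold on `Ω`, i.e. `B dx + A dt` and `N dx + M dt` are additional conservation
laws of the system with flux `f`. -/
theorem stmt_1
    (n : ℕ) (Ω : Set (Fin n → ℝ)) (hΩ : IsOpen Ω)
    (f : (Fin n → ℝ) → (Fin n → ℝ))
    (A B M N : (Fin n → ℝ) → ℝ)
    (hf : ContDiffOn ℝ 1 f Ω) (hA : ContDiffOn ℝ 1 A Ω)
    (hB : ContDiffOn ℝ 1 B Ω) (hM : ContDiffOn ℝ 1 M Ω)
    (hN : ContDiffOn ℝ 1 N Ω)
    (p r : (Fin n → ℝ) → ℝ × (Fin n → ℝ) × ℝ × ℝ × ℝ)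
    (hp : ∀ u, p u = (1, u, B u, N u, 0))
    (hr : ∀ u, r u = (0, f u, A u, M u, 1))
    (hstable : ∀ u ∈ Ω, ∀ i : Fin n,
      fderiv ℝ r u (Pi.single i 1) ∈
        Submodule.span ℝ ({p u, r u} ∪
          Set.range fun l : Fin n => fderiv ℝ p u (Pi.single l 1))) :
    ∀ u ∈ Ω, ∀ i : Fin n,
      fderiv ℝ A u (Pi.single i 1) =
        ∑ k : Fin n, fderiv ℝ B u (Pi.single k 1) *
          fderiv ℝ (fun x => f x k) u (Pi.single i 1) ∧
      fderiv ℝ M u (Pi.single i 1) =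
        ∑ k : Fin n, fderiv ℝ N u (Pi.single k 1) *
          fderiv ℝ (fun x => f x k) u (Pi.single i 1) := by
  intro u hu i
  have hdiff {F : Type} [NormedAddCommGroup F] [NormedSpace ℝ F] {g : (Fin n → ℝ) → F}
      (hg : ContDiffOn ℝ 1 g Ω) : DifferentiableAt ℝ g u :=
    (hg.contDiffAt (hΩ.mem_nhds hu)).differentiableAt one_ne_zero
  have hp' (v : Fin n → ℝ) : fderiv ℝ p u v = (0, v, fderiv ℝ B u v, fderiv ℝ N u v, 0) := by
    simpa only [funext hp, id_eq, fderiv_id, ContinuousLinearMap.id_apply]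
      using fderiv_tuple_apply differentiableAt_id (hdiff hB) (hdiff hN) 1 0 v
  have hr' (v : Fin n → ℝ) :
      fderiv ℝ r u v = (0, fderiv ℝ f u v, fderiv ℝ A u v, fderiv ℝ M u v, 0) := by
    rw [funext hr, fderiv_tuple_apply (hdiff hf) (hdiff hA) (hdiff hM)]
  have hspan := hstable u hu i
  rw [hp u, hr u, hr'] at hspan
  simp only [hp'] at hspan
  simp only [fderiv_apply (hdiff hf), ContinuousLinearMap.comp_apply,
    ContinuousLinearMap.proj_apply]
  exact eq_sum_mul_of_mem_span_ruledTangent hspan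
end

section
/- Let Ω ⊆ ℝⁿ be open, let f : Ω → ℝⁿ and A, B, M, N : Ω → ℝ be C¹ with ∂A/∂uⁱ = Σ_k (∂B/∂u^k)(∂f^k/∂uⁱ) and ∂M/∂uⁱ = Σ_k (∂N/∂u^k)(∂f^k/∂uⁱ) on Ω. Set p(u) = (1, u¹, …, uⁿ, B(u), N(u), 0), r(u) = (0, f¹(u), …, fⁿ(u), A(u), M(u), 1), and Z(u) = (Σᵢ uⁱ B_i(u) − B(u), −B_1(u), …, −B_n(u), 1, 0, Σᵢ fⁱ(u) B_i(u) − A(u)) in ℝ^{n+4}, where B_i = ∂B/∂uⁱ. Then for every u ∈ Ω the covector Z(u) annihilates p(u), r(u), and all partial derivatives ∂p/∂uⁱ(u) and ∂r/∂uⁱ(u): the hyperplane {Y : Z(u)·Y = 0} is tangent to the ruled hypersurface along the entire line generator through u. -/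
/-!
The covector `Z(u)` is built so that `Z(u)·(0, w, ∇B(u)·w, ν, 0) = 0` for every `w` and `ν`.
Both `∂p/∂uⁱ = (0, eᵢ, Bᵢ, Nᵢ, 0)` and `∂r/∂uⁱ = (0, ∂ᵢf, Aᵢ, Mᵢ, 0)` have this shape, the
latter because the conservation law gives `Aᵢ = ∇B·∂ᵢf`. Annihilation of `p(u)` and `r(u)`
themselves is a direct computation.
-/

/-- The dual pairing `Z·Y = Σ Zᵢ Yᵢ` on `ℝ^{n+4}`, realized as
`ℝ × (Fin n → ℝ) × ℝ × ℝ × ℝ` with coordinates `(Y⁰, Y¹…Yⁿ, Y^{n+1}, Y^{n+2}, Y^{n+3})`. -/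
noncomputable def dotV (n : ℕ) (Z Y : ℝ × (Fin n → ℝ) × ℝ × ℝ × ℝ) : ℝ :=
  Z.1 * Y.1 + (∑ i : Fin n, Z.2.1 i * Y.2.1 i) + Z.2.2.1 * Y.2.2.1 +
    Z.2.2.2.1 * Y.2.2.2.1 + Z.2.2.2.2 * Y.2.2.2.2

open Finset

section Pairing

variable {n : ℕ} (u y b : Fin n → ℝ) (β α : ℝ)

theorem dotV_covector_eq_zero_of_tangent (w : Fin n → ℝ) (c ν : ℝ)
    (hc : c = ∑ k, b k * w k) :
    dotV n (∑ i, u i * b i - β, fun i => -b i, 1, 0, ∑ i, y i * b i - α) (0, w, c, ν, 0) = 0 := by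
  simp only [dotV, hc, neg_mul, sum_neg_distrib]
  ring

theorem dotV_covector_point_eq_zero (ν : ℝ) :
    dotV n (∑ i, u i * b i - β, fun i => -b i, 1, 0, ∑ i, y i * b i - α) (1, u, β, ν, 0) = 0 := by
  simp only [dotV, neg_mul, sum_neg_distrib, mul_comm (b _)]
  ring

theorem dotV_covector_direction_eq_zero (μ : ℝ) :
    dotV n (∑ i, u i * b i - β, fun i => -b i, 1, 0, ∑ i, y i * b i - α) (0, y, α, μ, 1) = 0 := by
  simp only [dotV, neg_mul, sum_neg_distrib, mul_comm (b _)]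
  ring

end Pairing

theorem fderiv_tuple_apply_s3 {𝕜 E F₀ F₁ F₂ F₃ F₄ : Type*} [NontriviallyNormedField 𝕜]
    [NormedAddCommGroup E] [NormedSpace 𝕜 E] [NormedAddCommGroup F₀] [NormedSpace 𝕜 F₀]
    [NormedAddCommGroup F₁] [NormedSpace 𝕜 F₁] [NormedAddCommGroup F₂] [NormedSpace 𝕜 F₂]
    [NormedAddCommGroup F₃] [NormedSpace 𝕜 F₃] [NormedAddCommGroup F₄] [NormedSpace 𝕜 F₄]
    (c₀ : F₀) (c₄ : F₄) {g : E → F₁} {φ : E → F₂} {ψ : E → F₃} {u : E}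
    (hg : DifferentiableAt 𝕜 g u) (hφ : DifferentiableAt 𝕜 φ u) (hψ : DifferentiableAt 𝕜 ψ u)
    (v : E) :
    fderiv 𝕜 (fun x => (c₀, g x, φ x, ψ x, c₄)) u v =
      (0, fderiv 𝕜 g u v, fderiv 𝕜 φ u v, fderiv 𝕜 ψ u v, 0) := by
  have hψc : DifferentiableAt 𝕜 (fun x => (ψ x, c₄)) u := hψ.prodMk (differentiableAt_const _)
  have hφψc := hφ.prodMk hψc
  have hgφψc := hg.prodMk hφψc
  rw [(differentiableAt_const c₀).fderiv_prodMk hgφψc, hg.fderiv_prodMk hφψc,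
    hφ.fderiv_prodMk hψc, hψ.fderiv_prodMk (differentiableAt_const _)]
  simp

theorem stmt_3_general
    (n : ℕ) (Ω : Set (Fin n → ℝ)) (hΩ : IsOpen Ω)
    (f : (Fin n → ℝ) → (Fin n → ℝ))
    (A B M N : (Fin n → ℝ) → ℝ)
    (hf : ContDiffOn ℝ 1 f Ω) (hA : ContDiffOn ℝ 1 A Ω)
    (hB : ContDiffOn ℝ 1 B Ω) (hM : ContDiffOn ℝ 1 M Ω)
    (hN : ContDiffOn ℝ 1 N Ω)
    (hAB : ∀ u ∈ Ω, ∀ i : Fin n,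
      fderiv ℝ A u (Pi.single i 1) =
        ∑ k : Fin n, fderiv ℝ B u (Pi.single k 1) *
          fderiv ℝ (fun x => f x k) u (Pi.single i 1))
    (p r Z : (Fin n → ℝ) → ℝ × (Fin n → ℝ) × ℝ × ℝ × ℝ)
    (hp : ∀ u, p u = (1, u, B u, N u, 0))
    (hr : ∀ u, r u = (0, f u, A u, M u, 1))
    (hZ : ∀ u, Z u =
      ((∑ i : Fin n, u i * fderiv ℝ B u (Pi.single i 1)) - B u,
       fun i => -(fderiv ℝ B u (Pi.single i 1)),
       1, 0,
       (∑ i : Fin n, f u i * fderiv ℝ B u (Pi.single i 1)) - A u)) :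
    ∀ u ∈ Ω,
      dotV n (Z u) (p u) = 0 ∧
      dotV n (Z u) (r u) = 0 ∧
      (∀ i : Fin n, dotV n (Z u) (fderiv ℝ p u (Pi.single i 1)) = 0) ∧
      (∀ i : Fin n, dotV n (Z u) (fderiv ℝ r u (Pi.single i 1)) = 0) := by
  intro u hu
  have hdiff {F : Type} [NormedAddCommGroup F] [NormedSpace ℝ F] {g : (Fin n → ℝ) → F}
      (hg : ContDiffOn ℝ 1 g Ω) : DifferentiableAt ℝ g u :=
    (hg.contDiffAt (hΩ.mem_nhds hu)).differentiableAt one_ne_zero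
  rw [funext hp, funext hr, hZ u]
  refine ⟨dotV_covector_point_eq_zero .., dotV_covector_direction_eq_zero ..,
    fun i => ?_, fun i => ?_⟩
  · rw [fderiv_tuple_apply_s3 (g := fun x => x) _ _ differentiableAt_fun_id (hdiff hB) (hdiff hN)]
    refine dotV_covector_eq_zero_of_tangent _ _ _ _ _ _ _ _ ?_
    simp [Pi.single_apply]
  · rw [fderiv_tuple_apply_s3 _ _ (hdiff hf) (hdiff hA) (hdiff hM)]
    refine dotV_covector_eq_zero_of_tangent _ _ _ _ _ _ _ _ ?_
    simp only [hAB u hu i, fderiv_apply (hdiff hf)]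
    rfl

/-- For a system of conservation laws with flux `f` admitting two
additional conservation laws `(B, A)` and `(N, M)`, the covector
`Z(u) = (Σᵢ uⁱB_i − B, −B_1, …, −B_n, 1, 0, Σᵢ fⁱB_i − A)` annihilates
`p(u) = (1, u, B, N, 0)`, `r(u) = (0, f, A, M, 1)`, and all partial derivatives
`∂p/∂uⁱ(u)`, `∂r/∂uⁱ(u)`: the hyperplane `{Y : Z(u)·Y = 0}` is tangent to the
ruled hypersurface along the entire line generator through `u`. -/
theorem stmt_3
    (n : ℕ) (Ω : Set (Fin n → ℝ)) (hΩ : IsOpen Ω)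
    (f : (Fin n → ℝ) → (Fin n → ℝ))
    (A B M N : (Fin n → ℝ) → ℝ)
    (hf : ContDiffOn ℝ 1 f Ω) (hA : ContDiffOn ℝ 1 A Ω)
    (hB : ContDiffOn ℝ 1 B Ω) (hM : ContDiffOn ℝ 1 M Ω)
    (hN : ContDiffOn ℝ 1 N Ω)
    (hAB : ∀ u ∈ Ω, ∀ i : Fin n,
      fderiv ℝ A u (Pi.single i 1) =
        ∑ k : Fin n, fderiv ℝ B u (Pi.single k 1) *
          fderiv ℝ (fun x => f x k) u (Pi.single i 1))
    (hMN : ∀ u ∈ Ω, ∀ i : Fin n,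
      fderiv ℝ M u (Pi.single i 1) =
        ∑ k : Fin n, fderiv ℝ N u (Pi.single k 1) *
          fderiv ℝ (fun x => f x k) u (Pi.single i 1))
    (p r Z : (Fin n → ℝ) → ℝ × (Fin n → ℝ) × ℝ × ℝ × ℝ)
    (hp : ∀ u, p u = (1, u, B u, N u, 0))
    (hr : ∀ u, r u = (0, f u, A u, M u, 1))
    (hZ : ∀ u, Z u =
      ((∑ i : Fin n, u i * fderiv ℝ B u (Pi.single i 1)) - B u,
       fun i => -(fderiv ℝ B u (Pi.single i 1)),
       1, 0,
       (∑ i : Fin n, f u i * fderiv ℝ B u (Pi.single i 1)) - A u)) :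
    ∀ u ∈ Ω,
      dotV n (Z u) (p u) = 0 ∧
      dotV n (Z u) (r u) = 0 ∧
      (∀ i : Fin n, dotV n (Z u) (fderiv ℝ p u (Pi.single i 1)) = 0) ∧
      (∀ i : Fin n, dotV n (Z u) (fderiv ℝ r u (Pi.single i 1)) = 0) :=
  stmt_3_general n Ω hΩ f A B M N hf hA hB hM hN hAB p r Z hp hr hZ
end

section
/- Let Ω ⊆ ℝⁿ be open, let f : Ω → ℝⁿ and A, B : Ω → ℝ be C² with ∂A/∂uⁱ = Σ_k (∂B/∂u^k)(∂f^k/∂uⁱ) on Ω. Fix u ∈ Ω, λ ∈ ℝ, and ξ ∈ ℝⁿ with Df(u) ξ = λ ξ (ξ is a characteristic vector with characteristic speed λ). Then the vector η = Hess B(u) · ξ is a left eigenvector of Df(u) with the same eigenvalue: (Df(u))ᵀ η = λ η. In particular, the characteristic vectors of the system are also characteristic vectors of the dual system, in which the derivatives B_k serve as field variables. -/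
/-! Differentiating the compatibility relation `∇A = Df ᵀ ∇B` once more gives
`Hess A = Df ᵀ · Hess B + Σ_k ∂_k B · Hess fᵏ`. Since `Hess A` and every `Hess fᵏ` are
symmetric, so is `Df ᵀ · Hess B`, i.e. `Df ᵀ H = H Df` for the symmetric matrix `H = Hess B`.
Hence `Df ξ = λ ξ` gives `Df ᵀ (H ξ) = H Df ξ = λ H ξ`. -/

open Filter Topology Matrix

section SecondDerivative

variable {E F : Type*} [NormedAddCommGroup E] [NormedSpace ℝ E]
  [NormedAddCommGroup F] [NormedSpace ℝ F] {g : E → F} {u : E}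

theorem ContDiffAt.differentiableAt_fderiv_apply (hg : ContDiffAt ℝ 2 g u) (v : E) :
    DifferentiableAt ℝ (fun x => fderiv ℝ g x v) u :=
  ((hg.fderiv_right (m := 1) (by norm_num)).differentiableAt one_ne_zero).clm_apply
    (differentiableAt_const v)

theorem ContDiffAt.fderiv_fderiv_apply_comm (hg : ContDiffAt ℝ 2 g u) (v w : E) :
    fderiv ℝ (fun x => fderiv ℝ g x v) u w = fderiv ℝ (fun x => fderiv ℝ g x w) u v := by
  have hd : DifferentiableAt ℝ (fderiv ℝ g) u :=
    (hg.fderiv_right (m := 1) (by norm_num)).differentiableAt one_ne_zero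
  have hflip : ∀ v, fderiv ℝ (fun x => fderiv ℝ g x v) u = (fderiv ℝ (fderiv ℝ g) u).flip v := by
    intro v
    ext w
    simp [fderiv_clm_apply hd (differentiableAt_const v)]
  simpa only [hflip, ContinuousLinearMap.flip_apply] using
    hg.isSymmSndFDerivAt (by simp) w v

end SecondDerivative

theorem Matrix.transpose_mulVec_mulVec_eq_smul_of_mulVec_eq_smul {ι R : Type*} [Fintype ι]
    [CommSemiring R] {F H : Matrix ι ι R} (hFH : Fᵀ * H = H * F) {ξ : ι → R} {lam : R}
    (heig : F *ᵥ ξ = lam • ξ) : Fᵀ *ᵥ (H *ᵥ ξ) = lam • (H *ᵥ ξ) := by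
  rw [mulVec_mulVec, hFH, ← mulVec_mulVec, heig, mulVec_smul]

section Coordinates

variable {ι : Type*} [Fintype ι] [DecidableEq ι]

/-- `jacobian f u i j = ∂fⁱ/∂uʲ (u)`. -/
noncomputable def jacobian (f : (ι → ℝ) → ι → ℝ) (u : ι → ℝ) : Matrix ι ι ℝ :=
  Matrix.of fun i j => fderiv ℝ (fun x => f x i) u (Pi.single j 1)

/-- `hessian B u i j = ∂ᵢ∂ⱼB (u)`. -/
noncomputable def hessian (B : (ι → ℝ) → ℝ) (u : ι → ℝ) : Matrix ι ι ℝ :=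
  Matrix.of fun i j => fderiv ℝ (fun x => fderiv ℝ B x (Pi.single j 1)) u (Pi.single i 1)

theorem hessian_isSymm {B : (ι → ℝ) → ℝ} {u : ι → ℝ} (hB : ContDiffAt ℝ 2 B u) :
    (hessian B u).IsSymm :=
  Matrix.IsSymm.ext fun _ _ => hB.fderiv_fderiv_apply_comm _ _

/-- `B(u)_t = A(u)_x` for smooth solutions of `u_t = f(u)_x`; by the chain rule this is
`∇A = Df ᵀ ∇B`, here imposed at the point `x`. -/
def IsAdditionalConservationLawAt (f : (ι → ℝ) → ι → ℝ) (A B : (ι → ℝ) → ℝ) (x : ι → ℝ) :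
    Prop :=
  ∀ i, fderiv ℝ A x (Pi.single i 1) =
    ∑ k, fderiv ℝ B x (Pi.single k 1) * fderiv ℝ (fun y => f y k) x (Pi.single i 1)

variable {f : (ι → ℝ) → ι → ℝ} {A B : (ι → ℝ) → ℝ} {u : ι → ℝ}

theorem fderiv_fderiv_apply_of_conservationLaw (hf : ContDiffAt ℝ 2 f u)
    (hB : ContDiffAt ℝ 2 B u)
    (hAB : ∀ᶠ x in 𝓝 u, IsAdditionalConservationLawAt f A B x)
    (i j : ι) :
    fderiv ℝ (fun x => fderiv ℝ A x (Pi.single i 1)) u (Pi.single j 1) =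
      ∑ k, (hessian B u j k * jacobian f u k i + fderiv ℝ B u (Pi.single k 1) *
        fderiv ℝ (fun x => fderiv ℝ (fun y => f y k) x (Pi.single i 1)) u (Pi.single j 1)) := by
  have hfk := contDiffAt_pi.1 hf
  have hdiff : ∀ k ∈ Finset.univ, DifferentiableAt ℝ (fun x => fderiv ℝ B x (Pi.single k 1) *
      fderiv ℝ (fun y => f y k) x (Pi.single i 1)) u := fun k _ =>
    (hB.differentiableAt_fderiv_apply _).mul ((hfk k).differentiableAt_fderiv_apply _)
  rw [EventuallyEq.fderiv_eq (hAB.mono fun x hx => hx i), fderiv_fun_sum hdiff,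
    _root_.sum_apply]
  refine Finset.sum_congr rfl fun k _ => ?_
  rw [fderiv_fun_mul (hB.differentiableAt_fderiv_apply _) ((hfk k).differentiableAt_fderiv_apply _)]
  simp only [_root_.add_apply, _root_.smul_apply, smul_eq_mul,
    hessian, jacobian, Matrix.of_apply]
  ring

theorem jacobian_transpose_mul_hessian_of_conservationLaw (hf : ContDiffAt ℝ 2 f u)
    (hA : ContDiffAt ℝ 2 A u) (hB : ContDiffAt ℝ 2 B u)
    (hAB : ∀ᶠ x in 𝓝 u, IsAdditionalConservationLawAt f A B x) :
    (jacobian f u)ᵀ * hessian B u = hessian B u * jacobian f u := by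
  have hsymm := hessian_isSymm hB
  ext i j
  have h := fderiv_fderiv_apply_of_conservationLaw hf hB hAB i j
  rw [hA.fderiv_fderiv_apply_comm, fderiv_fderiv_apply_of_conservationLaw hf hB hAB j i] at h
  simp only [fun k => ((contDiffAt_pi.1 hf) k).fderiv_fderiv_apply_comm (Pi.single i 1)
    (Pi.single j 1), Finset.sum_add_distrib, add_left_inj] at h
  simp only [mul_apply, transpose_apply, hsymm.apply j]
  simpa only [mul_comm] using h.symm

end Coordinates

/-- Let `f, A, B` be `C²` on the open set `Ω` with
`∂A/∂uⁱ = Σ_k (∂B/∂u^k)(∂f^k/∂uⁱ)` on `Ω`. If `ξ` is a characteristic (right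
eigen-) vector of `Df(u)` with characteristic speed `λ`, i.e.
`Σ_j (∂fⁱ/∂u^j) ξ_j = λ ξᵢ`, then `η = Hess B(u) · ξ` is a left eigenvector of
`Df(u)` with the same eigenvalue: `Σᵢ (∂fⁱ/∂u^j) ηᵢ = λ η_j` for every `j`.
In particular the characteristic vectors of the system are also characteristic
vectors of the dual system, in which the derivatives `B_k` serve as field
variables. -/
theorem stmt_5
    (n : ℕ) (Ω : Set (Fin n → ℝ)) (hΩ : IsOpen Ω)
    (f : (Fin n → ℝ) → (Fin n → ℝ))
    (A B : (Fin n → ℝ) → ℝ)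
    (hf : ContDiffOn ℝ 2 f Ω) (hA : ContDiffOn ℝ 2 A Ω)
    (hB : ContDiffOn ℝ 2 B Ω)
    (hAB : ∀ u ∈ Ω, ∀ i : Fin n,
      fderiv ℝ A u (Pi.single i 1) =
        ∑ k : Fin n, fderiv ℝ B u (Pi.single k 1) *
          fderiv ℝ (fun x => f x k) u (Pi.single i 1))
    (u : Fin n → ℝ) (hu : u ∈ Ω) (lam : ℝ) (ξ : Fin n → ℝ)
    (heig : ∀ i : Fin n,
      ∑ j : Fin n, fderiv ℝ (fun x => f x i) u (Pi.single j 1) * ξ j = lam * ξ i) :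
    ∀ j : Fin n,
      ∑ i : Fin n, fderiv ℝ (fun x => f x i) u (Pi.single j 1) *
        (∑ k : Fin n,
          fderiv ℝ (fun x => fderiv ℝ B x (Pi.single k 1)) u (Pi.single i 1) * ξ k) =
      lam * ∑ k : Fin n,
        fderiv ℝ (fun x => fderiv ℝ B x (Pi.single k 1)) u (Pi.single j 1) * ξ k := by
  have hΩu : Ω ∈ 𝓝 u := hΩ.mem_nhds hu
  have hFH := jacobian_transpose_mul_hessian_of_conservationLaw (hf.contDiffAt hΩu)
    (hA.contDiffAt hΩu) (hB.contDiffAt hΩu) (eventually_of_mem hΩu hAB)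
  have hξ : jacobian f u *ᵥ ξ = lam • ξ := funext heig
  exact congrFun (Matrix.transpose_mulVec_mulVec_eq_smul_of_mulVec_eq_smul hFH hξ)
end

section
/- Let Ω ⊆ ℝⁿ be open, ε : {1,…,n} → {1, −1}, h : Ω → ℝ be C¹, and define on ℝ^{n+4} (coordinates X₀, X₁, …, Xₙ, X_{n+1}, X_{n+2}, X_{n+3}) the symmetric bilinear form (X,Y) = Σᵢ εⁱ XᵢYᵢ − X₀Y_{n+1} − X_{n+1}Y₀ − X_{n+2}Y_{n+3} − X_{n+3}Y_{n+2}. Set p(u) = (1, u¹, …, uⁿ, ½Σ_k ε^k(u^k)², h(u), 0) and r(u) = (0, ε¹h_1(u), …, εⁿh_n(u), Σ_k u^k h_k(u) − h(u), ½Σ_k ε^k h_k(u)², 1). Then for every u ∈ Ω: (p(u), p(u)) = 0, (r(u), r(u)) = 0, and (p(u), r(u)) = 0. Hence the line generators of the ruled hypersurface of the Hamiltonian system lie on the smooth quadric (X,X) = 0. -/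
/-- The symmetric bilinear form
`(X,Y) = Σᵢ εⁱ XᵢYᵢ − X₀Y_{n+1} − X_{n+1}Y₀ − X_{n+2}Y_{n+3} − X_{n+3}Y_{n+2}`
on `ℝ^{n+4}`, realized as `ℝ × (Fin n → ℝ) × ℝ × ℝ × ℝ` with coordinates
`(X₀, X₁…Xₙ, X_{n+1}, X_{n+2}, X_{n+3})`. -/
noncomputable def formQ (n : ℕ) (ε : Fin n → ℝ)
    (X Y : ℝ × (Fin n → ℝ) × ℝ × ℝ × ℝ) : ℝ :=
  (∑ i : Fin n, ε i * X.2.1 i * Y.2.1 i) - X.1 * Y.2.2.1 - X.2.2.1 * Y.1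
    - X.2.2.2.1 * Y.2.2.2.2 - X.2.2.2.2 * Y.2.2.2.1

/-- For the Hamiltonian system `uⁱ_t = εⁱ (d/dx)(∂h/∂uⁱ)` the two
generator points `p(u) = (1, u, ½Σε^k(u^k)², h, 0)` and
`r(u) = (0, ε¹h_1, …, εⁿh_n, Σu^k h_k − h, ½Σε^k h_k², 1)` satisfy
`(p,p) = (r,r) = (p,r) = 0`. Hence the line generators of the ruled
hypersurface of the Hamiltonian system lie on the smooth quadric `(X,X) = 0`. -/
theorem stmt_7
    (n : ℕ) (Ω : Set (Fin n → ℝ)) (hΩ : IsOpen Ω)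
    (ε : Fin n → ℝ) (hε : ∀ i, ε i = 1 ∨ ε i = -1)
    (h : (Fin n → ℝ) → ℝ) (hh : ContDiffOn ℝ 1 h Ω)
    (p r : (Fin n → ℝ) → ℝ × (Fin n → ℝ) × ℝ × ℝ × ℝ)
    (hp : ∀ u, p u =
      (1, u, (1 / 2) * ∑ k : Fin n, ε k * (u k) ^ 2, h u, 0))
    (hr : ∀ u, r u =
      (0, fun i => ε i * fderiv ℝ h u (Pi.single i 1),
       (∑ k : Fin n, u k * fderiv ℝ h u (Pi.single k 1)) - h u,
       (1 / 2) * ∑ k : Fin n, ε k * (fderiv ℝ h u (Pi.single k 1)) ^ 2, 1)) :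
    ∀ u ∈ Ω,
      formQ n ε (p u) (p u) = 0 ∧
      formQ n ε (r u) (r u) = 0 ∧
      formQ n ε (p u) (r u) = 0 := by
  intro u _
  have hε2 : ∀ i, ε i * ε i = 1 := by
    intro i; rcases hε i with h1 | h1 <;> rw [h1] <;> norm_num
  set d : Fin n → ℝ := fun k => fderiv ℝ h u (Pi.single k 1) with hd
  refine ⟨?_, ?_, ?_⟩
  · simp only [formQ, hp]
    have : ∀ i : Fin n, ε i * u i * u i = ε i * (u i) ^ 2 := by intro i; ring
    rw [Finset.sum_congr rfl fun i _ => this i]; ring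
  · simp only [formQ, hr]
    have : ∀ i : Fin n, ε i * (ε i * d i) * (ε i * d i) = ε i * (d i) ^ 2 := by
      intro i; rcases hε i with h1 | h1 <;> rw [h1] <;> ring
    rw [Finset.sum_congr rfl fun i _ => this i]; ring
  · simp only [formQ, hp, hr]
    have : ∀ i : Fin n, ε i * u i * (ε i * d i) = u i * d i := by
      intro i; rcases hε i with h1 | h1 <;> rw [h1] <;> ring
    rw [Finset.sum_congr rfl fun i _ => this i]
    have : ∀ k : Fin n, u k * d k = u k * fderiv ℝ h u (Pi.single k 1) := fun k => rfl
    simp only [hd]; ring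
end

section
/- Let Ω ⊆ ℝⁿ be open, ε : {1,…,n} → {1, −1}, h : Ω → ℝ be C², and equip ℝ^{n+4} with the symmetric bilinear form (X,Y) = Σᵢ εⁱ XᵢYᵢ − X₀Y_{n+1} − X_{n+1}Y₀ − X_{n+2}Y_{n+3} − X_{n+3}Y_{n+2}. Let p(u) = (1, u¹, …, uⁿ, ½Σ_k ε^k(u^k)², h(u), 0) and r(u) = (0, ε¹h_1(u), …, εⁿh_n(u), Σ_k u^k h_k(u) − h(u), ½Σ_k ε^k h_k(u)², 1). Then for every u ∈ Ω and every direction v ∈ ℝⁿ, (r(u), Dp(u)[v]) = 0, where Dp(u)[v] is the directional derivative of p at u along v. That is, the family of line generators of the ruled hypersurface of a Hamiltonian system satisfies the Legendre condition with respect to the contact form on lines of the quadric. -/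
/-!
Since `r(u)` has first entry `0` and last entry `1`, while `Dp(u)[v]` has first and last
entries `0`, the pairing only sees the middle block and the `h`-entry of `Dp(u)[v]`:
it equals `Σᵢ (εⁱ)² hᵢ vⁱ − Dh(u)[v]`, which vanishes because `(εⁱ)² = 1`.
-/

theorem ContinuousLinearMap.apply_eq_sum_single {ι R M : Type*} [Fintype ι] [DecidableEq ι]
    [Semiring R] [TopologicalSpace R] [AddCommMonoid M] [Module R M] [TopologicalSpace M]
    (L : (ι → R) →L[R] M) (v : ι → R) : L v = ∑ i, v i • L (Pi.single i 1) := by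
  conv_lhs => rw [← Finset.univ_sum_single v, map_sum]
  refine Finset.sum_congr rfl fun i _ => ?_
  rw [← map_smul, ← Pi.single_smul', smul_eq_mul, mul_one]

theorem formQ_generator_pair {n : ℕ} {ε : Fin n → ℝ} (hε : ∀ i, ε i = 1 ∨ ε i = -1)
    (a v : Fin n → ℝ) (s t c b : ℝ) :
    formQ n ε (0, fun i => ε i * a i, s, t, 1) (0, v, c, b, 0) = ∑ i, v i * a i - b := by
  have hε_sq (i : Fin n) : ε i * (ε i * a i) * v i = v i * a i := by
    rcases hε i with h | h <;> rw [h] <;> ring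
  simp [formQ, hε_sq]

theorem fderiv_generator_apply {n : ℕ} {q h : (Fin n → ℝ) → ℝ} {u : Fin n → ℝ}
    (hq : DifferentiableAt ℝ q u) (hh : DifferentiableAt ℝ h u) (v : Fin n → ℝ) :
    fderiv ℝ (fun u => ((1 : ℝ), u, q u, h u, (0 : ℝ))) u v
      = (0, v, fderiv ℝ q u v, fderiv ℝ h u v, 0) := by
  rw [((hasFDerivAt_const _ u).prodMk ((hasFDerivAt_id u).prodMk (hq.hasFDerivAt.prodMk
    (hh.hasFDerivAt.prodMk (hasFDerivAt_const _ u))))).fderiv]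
  simp

/-- For the Hamiltonian system `uⁱ_t = εⁱ (d/dx)(∂h/∂uⁱ)` with
generators `p(u) = (1, u, ½Σε^k(u^k)², h, 0)` and
`r(u) = (0, ε∇h, Σu^k h_k − h, ½Σε^k h_k², 1)`, one has
`(r(u), Dp(u)[v]) = 0` for every `u ∈ Ω` and every direction `v ∈ ℝⁿ`. That
is, the family of line generators of the ruled hypersurface of a Hamiltonian
system satisfies the Legendre condition with respect to the contact form on
lines of the quadric. -/
theorem stmt_8
    (n : ℕ) (Ω : Set (Fin n → ℝ)) (hΩ : IsOpen Ω)
    (ε : Fin n → ℝ) (hε : ∀ i, ε i = 1 ∨ ε i = -1)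
    (h : (Fin n → ℝ) → ℝ) (hh : ContDiffOn ℝ 2 h Ω)
    (p r : (Fin n → ℝ) → ℝ × (Fin n → ℝ) × ℝ × ℝ × ℝ)
    (hp : ∀ u, p u =
      (1, u, (1 / 2) * ∑ k : Fin n, ε k * (u k) ^ 2, h u, 0))
    (hr : ∀ u, r u =
      (0, fun i => ε i * fderiv ℝ h u (Pi.single i 1),
       (∑ k : Fin n, u k * fderiv ℝ h u (Pi.single k 1)) - h u,
       (1 / 2) * ∑ k : Fin n, ε k * (fderiv ℝ h u (Pi.single k 1)) ^ 2, 1)) :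
    ∀ u ∈ Ω, ∀ v : Fin n → ℝ,
      formQ n ε (r u) (fderiv ℝ p u v) = 0 := by
  intro u hu v
  have hdiff : DifferentiableAt ℝ h u :=
    (hh.differentiableOn two_ne_zero).differentiableAt (hΩ.mem_nhds hu)
  rw [funext hp, fderiv_generator_apply (by fun_prop) hdiff, hr, formQ_generator_pair hε,
    (fderiv ℝ h u).apply_eq_sum_single v]
  simp only [smul_eq_mul, sub_self]
end

section
/- Equip ℝ^{n+4} (coordinates X₀, …, X_{n+3}) with the symmetric bilinear form (X,Y) = Σᵢ εⁱ XᵢYᵢ − X₀Y_{n+1} − X_{n+1}Y₀ − X_{n+2}Y_{n+3} − X_{n+3}Y_{n+2}, where εⁱ = ±1. For parameters (u, k, h, m) ∈ ℝⁿ × ℝⁿ × ℝ × ℝ define p(u, h) = (1, u¹, …, uⁿ, ½Σ_kε^k(u^k)², h, 0) and s(u, k, h, m) = (0, ε¹k₁, …, εⁿkₙ, Σᵢ kᵢuⁱ − h, m, 1). Then for any tangent vector with components (v, w, c, e) ∈ ℝⁿ × ℝⁿ × ℝ × ℝ, the pairing of s with the corresponding derivative of p is (s(u,k,h,m), Dp(u,h)[(v,c)])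 = Σᵢ kᵢ vᵢ − c. In particular, the contact distribution on the (2n+1)-parameter family of lines spanned by p and s is given in this chart by the standard contact form Σᵢ kᵢ duⁱ − dh. -/
open ContinuousLinearMap

theorem formQ_apply_of_fst_eq_zero (n : ℕ) (ε a v : Fin n → ℝ) (b m q c : ℝ) :
    formQ n ε (0, a, b, m, 1) (0, v, q, c, 0) = ∑ i, ε i * a i * v i - c := by
  simp [formQ]

section
variable {ι : Type*} [Fintype ι] (ε : ι → ℝ)

theorem hasFDerivAt_sum_mul_sq (u : ι → ℝ) :
    HasFDerivAt (fun x : ι → ℝ => ∑ i, ε i * x i ^ 2)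
      (∑ i, (2 * ε i * u i) • (proj i : (ι → ℝ) →L[ℝ] ℝ)) u := by
  refine HasFDerivAt.fun_sum fun i _ => ?_
  refine (((hasFDerivAt_apply (𝕜 := ℝ) i u).pow 2).const_mul (ε i)).congr_fderiv ?_
  ext v
  simp only [Nat.add_one_sub_one, pow_one, nsmul_eq_mul, Nat.cast_ofNat, smul_apply, proj_apply,
    smul_eq_mul]
  ring

/-- The point `p(u, h)` of the paper. -/
noncomputable def quadricChart (x : (ι → ℝ) × ℝ) : ℝ × (ι → ℝ) × ℝ × ℝ × ℝ :=
  (1, x.1, (1 / 2) * ∑ i, ε i * x.1 i ^ 2, x.2, 0)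

theorem fderiv_quadricChart_apply (u v : ι → ℝ) (h c : ℝ) :
    fderiv ℝ (quadricChart ε) (u, h) (v, c) = (0, v, ∑ i, ε i * u i * v i, c, 0) := by
  have hquad := ((hasFDerivAt_sum_mul_sq ε u).comp (u, h)
    (hasFDerivAt_fst (𝕜 := ℝ) (p := (u, h)))).const_mul (1 / 2 : ℝ)
  have hchart : HasFDerivAt (quadricChart ε) _ (u, h) :=
    (hasFDerivAt_const (𝕜 := ℝ) (1 : ℝ) (u, h)).prodMk (hasFDerivAt_fst.prodMk
      (hquad.prodMk (hasFDerivAt_snd.prodMk (hasFDerivAt_const (𝕜 := ℝ) (0 : ℝ) (u, h)))))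
  rw [hchart.fderiv]
  simp only [one_div, ContinuousLinearMap.prod_apply, zero_apply, coe_fst', smul_apply, comp_apply,
    sum_apply, proj_apply, smul_eq_mul, Finset.mul_sum, coe_snd', Prod.mk.injEq, and_true, true_and]
  exact Finset.sum_congr rfl fun i _ => by ring

end

theorem stmt_9_general
    (n : ℕ) (ε : Fin n → ℝ) (hε : ∀ i, ε i = 1 ∨ ε i = -1)
    (p : ((Fin n → ℝ) × ℝ) → ℝ × (Fin n → ℝ) × ℝ × ℝ × ℝ)
    (hp : ∀ x : (Fin n → ℝ) × ℝ, p x =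
      (1, x.1, (1 / 2) * ∑ k : Fin n, ε k * (x.1 k) ^ 2, x.2, 0))
    (u k : Fin n → ℝ) (hval m : ℝ)
    (s : ℝ × (Fin n → ℝ) × ℝ × ℝ × ℝ)
    (hs : s = (0, fun i => ε i * k i, (∑ i : Fin n, k i * u i) - hval, m, 1))
    (v : Fin n → ℝ) (c : ℝ) :
    formQ n ε s (fderiv ℝ p (u, hval) (v, c)) = (∑ i : Fin n, k i * v i) - c := by
  have hp_eq : p = quadricChart ε := funext hp
  have hε_sq : ∀ i, ε i * (ε i * k i) * v i = k i * v i := fun i => by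
    rcases hε i with h | h <;> simp [h]
  subst hp_eq hs
  rw [fderiv_quadricChart_apply, formQ_apply_of_fst_eq_zero]
  simp only [hε_sq]

/-- With `p(u, h) = (1, u, ½Σε^k(u^k)², h, 0)` and
`s(u, k, h, m) = (0, ε¹k₁, …, εⁿkₙ, Σᵢkᵢuⁱ − h, m, 1)`, for any tangent vector
with components `(v, w, c, e)` the pairing of `s` with the corresponding
derivative of `p` is `(s, Dp(u,h)[(v,c)]) = Σᵢ kᵢvᵢ − c`. In particular, the
contact distribution on the `(2n+1)`-parameter family of lines spanned by `p`
and `s` is given in this chart by the standard contact form `Σᵢ kᵢ duⁱ − dh`. -/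
theorem stmt_9
    (n : ℕ) (ε : Fin n → ℝ) (hε : ∀ i, ε i = 1 ∨ ε i = -1)
    (p : ((Fin n → ℝ) × ℝ) → ℝ × (Fin n → ℝ) × ℝ × ℝ × ℝ)
    (hp : ∀ x : (Fin n → ℝ) × ℝ, p x =
      (1, x.1, (1 / 2) * ∑ k : Fin n, ε k * (x.1 k) ^ 2, x.2, 0))
    (u k : Fin n → ℝ) (hval m : ℝ)
    (s : ℝ × (Fin n → ℝ) × ℝ × ℝ × ℝ)
    (hs : s = (0, fun i => ε i * k i, (∑ i : Fin n, k i * u i) - hval, m, 1))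
    (v w : Fin n → ℝ) (c e : ℝ) :
    formQ n ε s (fderiv ℝ p (u, hval) (v, c)) = (∑ i : Fin n, k i * v i) - c :=
  stmt_9_general n ε hε p hp u k hval m s hs v c
end

section
/- Let Ω ⊆ ℝⁿ be open, ε : {1,…,n} → {1, −1}, h : Ω → ℝ be C², and set fⁱ = εⁱh_i, B = ½Σ_kε^k(u^k)², A = Σ_k u^k h_k − h, N = h, M = ½Σ_kε^k h_k². Define the point generators p(u) = (1, u, B, N, 0), r(u) = (0, f, A, M, 1) ∈ ℝ^{n+4} and the dual (hyperplane) generators p̃(u) = (Σᵢuⁱ B_i − B, −B_1, …, −B_n, 1, 0, Σᵢfⁱ B_i − A) and r̃(u) = (Σᵢuⁱ N_i − N, −N_1, …, −N_n, 0, 1, Σᵢfⁱ N_i − M). Then for every u ∈ Ω and every Y ∈ ℝ^{n+4}: p̃(u)·Y = −(p(u), Y) and r̃(u)·Y = −(r(u), Y), where p̃·Y = Σ p̃ᵢYᵢ is the dual pairing and (X,Y) = Σᵢ εⁱ XᵢYᵢ − X₀Y_{n+1} − X_{n+1}Y₀ − X_{n+2}Y_{n+3} − X_{n+3}Y_{n+2}.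 Hence the Hamiltonian system is auto-dual: the points of the dual hypersurface Σ* are exactly the polar hyperplanes of the points of Σ with respect to the quadric (X,X) = 0. -/
/-! `polarCovector ε X` is the covector `-(X, ·)`, whose kernel is the polar hyperplane of `X`.
With `B_i = εⁱuⁱ`, `N_i = h_i` and `εⁱεⁱ = 1`, Euler-type sums such as `Σ uⁱB_i = 2B` and
`Σ fⁱN_i = 2M` collapse the entries of `p̃` and `r̃` to exactly `polarCovector ε p` and
`polarCovector ε r`. -/

def polarCovector {n : ℕ} (ε : Fin n → ℝ) (X : ℝ × (Fin n → ℝ) × ℝ × ℝ × ℝ) :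
    ℝ × (Fin n → ℝ) × ℝ × ℝ × ℝ :=
  (X.2.2.1, fun i => -(ε i * X.2.1 i), X.1, X.2.2.2.2, X.2.2.2.1)

theorem dotV_polarCovector {n : ℕ} (ε : Fin n → ℝ) (X Y : ℝ × (Fin n → ℝ) × ℝ × ℝ × ℝ) :
    dotV n (polarCovector ε X) Y = -formQ n ε X Y := by
  simp only [dotV, formQ, polarCovector, neg_mul, Finset.sum_neg_distrib]
  ring

theorem fderiv_half_sum_mul_sq_apply_single {n : ℕ} (ε u : Fin n → ℝ) (i : Fin n) :
    fderiv ℝ (fun v : Fin n → ℝ => (1 / 2) * ∑ k, ε k * v k ^ 2) u (Pi.single i 1)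
      = ε i * u i := by
  have hderiv : HasFDerivAt (fun v : Fin n → ℝ => (1 / 2) * ∑ k, ε k * v k ^ 2)
      ((1 / 2 : ℝ) • ∑ k, ε k •
        ((2 * u k) • ContinuousLinearMap.proj (R := ℝ) (φ := fun _ : Fin n => ℝ) k)) u := by
    refine .const_mul (.fun_sum fun k _ => .const_mul ?_ (ε k)) _
    simpa using (hasFDerivAt_apply (𝕜 := ℝ) (F' := fun _ : Fin n => ℝ) k u).pow 2
  rw [hderiv.fderiv]
  simp [Pi.single_apply]
  ring

theorem stmt_10_general
    (n : ℕ) (Ω : Set (Fin n → ℝ))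
    (ε : Fin n → ℝ) (hε : ∀ i, ε i = 1 ∨ ε i = -1)
    (h : (Fin n → ℝ) → ℝ)
    (f : (Fin n → ℝ) → (Fin n → ℝ))
    (A B M N : (Fin n → ℝ) → ℝ)
    (hfdef : ∀ u, ∀ i : Fin n, f u i = ε i * fderiv ℝ h u (Pi.single i 1))
    (hBdef : ∀ u, B u = (1 / 2) * ∑ k : Fin n, ε k * (u k) ^ 2)
    (hAdef : ∀ u, A u = (∑ k : Fin n, u k * fderiv ℝ h u (Pi.single k 1)) - h u)
    (hNdef : ∀ u, N u = h u)
    (hMdef : ∀ u, M u = (1 / 2) * ∑ k : Fin n, ε k * (fderiv ℝ h u (Pi.single k 1)) ^ 2)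
    (p r pt rt : (Fin n → ℝ) → ℝ × (Fin n → ℝ) × ℝ × ℝ × ℝ)
    (hp : ∀ u, p u = (1, u, B u, N u, 0))
    (hr : ∀ u, r u = (0, f u, A u, M u, 1))
    (hpt : ∀ u, pt u =
      ((∑ i : Fin n, u i * fderiv ℝ B u (Pi.single i 1)) - B u,
       fun i => -(fderiv ℝ B u (Pi.single i 1)),
       1, 0,
       (∑ i : Fin n, f u i * fderiv ℝ B u (Pi.single i 1)) - A u))
    (hrt : ∀ u, rt u =
      ((∑ i : Fin n, u i * fderiv ℝ N u (Pi.single i 1)) - N u,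
       fun i => -(fderiv ℝ N u (Pi.single i 1)),
       0, 1,
       (∑ i : Fin n, f u i * fderiv ℝ N u (Pi.single i 1)) - M u)) :
    ∀ u ∈ Ω, ∀ Y : ℝ × (Fin n → ℝ) × ℝ × ℝ × ℝ,
      dotV n (pt u) Y = -(formQ n ε (p u) Y) ∧
      dotV n (rt u) Y = -(formQ n ε (r u) Y) := by
  have hεε : ∀ i, ε i * ε i = 1 := fun i => by rcases hε i with hi | hi <;> simp [hi]
  have hB_i : ∀ u i, fderiv ℝ B u (Pi.single i 1) = ε i * u i := fun u i => by
    rw [funext hBdef]; exact fderiv_half_sum_mul_sq_apply_single ε u i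
  have hN : N = h := funext hNdef
  intro u _ Y
  have hp_polar : pt u = polarCovector ε (p u) := by
    have hsum_u : ∑ i, u i * (ε i * u i) = ∑ i, ε i * u i ^ 2 :=
      Finset.sum_congr rfl fun i _ => by ring
    have hsum_f : ∑ i, f u i * (ε i * u i) = ∑ i, u i * fderiv ℝ h u (Pi.single i 1) :=
      Finset.sum_congr rfl fun i _ => by
        rw [hfdef]; linear_combination (u i * fderiv ℝ h u (Pi.single i 1)) * hεε i
    simp only [hpt, hp, polarCovector, hB_i, Prod.mk.injEq, true_and]
    constructor
    · rw [hBdef]; linear_combination hsum_u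
    · rw [hAdef, hNdef]; linear_combination hsum_f
  have hr_polar : rt u = polarCovector ε (r u) := by
    have hsum_f : ∑ i, f u i * fderiv ℝ h u (Pi.single i 1)
        = ∑ i, ε i * fderiv ℝ h u (Pi.single i 1) ^ 2 :=
      Finset.sum_congr rfl fun i _ => by rw [hfdef]; ring
    simp only [hrt, hr, polarCovector, hN, Prod.mk.injEq, true_and]
    refine ⟨by rw [hAdef], funext fun i => ?_, ?_⟩
    · rw [hfdef]; linear_combination (fderiv ℝ h u (Pi.single i 1)) * hεε i
    · rw [hMdef]; linear_combination hsum_f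
  rw [hp_polar, hr_polar]
  exact ⟨dotV_polarCovector ε _ Y, dotV_polarCovector ε _ Y⟩

/-- For the Hamiltonian system with `fⁱ = εⁱh_i`,
`B = ½Σε^k(u^k)²`, `A = Σu^k h_k − h`, `N = h`, `M = ½Σε^k h_k²`, the point
generators `p(u) = (1, u, B, N, 0)`, `r(u) = (0, f, A, M, 1)` and the dual
hyperplane generators
`p̃(u) = (Σuⁱ B_i − B, −B_1, …, −B_n, 1, 0, Σfⁱ B_i − A)`,
`r̃(u) = (Σuⁱ N_i − N, −N_1, …, −N_n, 0, 1, Σfⁱ N_i − M)`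
satisfy `p̃(u)·Y = −(p(u), Y)` and `r̃(u)·Y = −(r(u), Y)` for every `Y`. Hence
the Hamiltonian system is auto-dual: the points of the dual hypersurface `Σ*`
are exactly the polar hyperplanes of the points of `Σ` with respect to the
quadric `(X,X) = 0`. -/
theorem stmt_10
    (n : ℕ) (Ω : Set (Fin n → ℝ)) (hΩ : IsOpen Ω)
    (ε : Fin n → ℝ) (hε : ∀ i, ε i = 1 ∨ ε i = -1)
    (h : (Fin n → ℝ) → ℝ) (hh : ContDiffOn ℝ 2 h Ω)
    (f : (Fin n → ℝ) → (Fin n → ℝ))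
    (A B M N : (Fin n → ℝ) → ℝ)
    (hfdef : ∀ u, ∀ i : Fin n, f u i = ε i * fderiv ℝ h u (Pi.single i 1))
    (hBdef : ∀ u, B u = (1 / 2) * ∑ k : Fin n, ε k * (u k) ^ 2)
    (hAdef : ∀ u, A u = (∑ k : Fin n, u k * fderiv ℝ h u (Pi.single k 1)) - h u)
    (hNdef : ∀ u, N u = h u)
    (hMdef : ∀ u, M u = (1 / 2) * ∑ k : Fin n, ε k * (fderiv ℝ h u (Pi.single k 1)) ^ 2)
    (p r pt rt : (Fin n → ℝ) → ℝ × (Fin n → ℝ) × ℝ × ℝ × ℝ)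
    (hp : ∀ u, p u = (1, u, B u, N u, 0))
    (hr : ∀ u, r u = (0, f u, A u, M u, 1))
    (hpt : ∀ u, pt u =
      ((∑ i : Fin n, u i * fderiv ℝ B u (Pi.single i 1)) - B u,
       fun i => -(fderiv ℝ B u (Pi.single i 1)),
       1, 0,
       (∑ i : Fin n, f u i * fderiv ℝ B u (Pi.single i 1)) - A u))
    (hrt : ∀ u, rt u =
      ((∑ i : Fin n, u i * fderiv ℝ N u (Pi.single i 1)) - N u,
       fun i => -(fderiv ℝ N u (Pi.single i 1)),
       0, 1,
       (∑ i : Fin n, f u i * fderiv ℝ N u (Pi.single i 1)) - M u)) :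
    ∀ u ∈ Ω, ∀ Y : ℝ × (Fin n → ℝ) × ℝ × ℝ × ℝ,
      dotV n (pt u) Y = -(formQ n ε (p u) Y) ∧
      dotV n (rt u) Y = -(formQ n ε (r u) Y) :=
  stmt_10_general n Ω ε hε h f A B M N hfdef hBdef hAdef hNdef hMdef p r pt rt hp hr hpt hrt
end

section
/- Let Ω ⊆ ℝⁿ be open, let f : Ω → ℝⁿ and A, B, M, N : Ω → ℝ be C¹ with ∂A/∂uⁱ = Σ_k (∂B/∂u^k)(∂f^k/∂uⁱ) and ∂M/∂uⁱ = Σ_k (∂N/∂u^k)(∂f^k/∂uⁱ) on Ω, and set p(u) = (1, u, B(u), N(u), 0), r(u) = (0, f(u), A(u), M(u), 1) ∈ ℝ^{n+4}. Suppose λ : Ω → ℝ is C¹ and ξ : Ω → ℝⁿ satisfies Df(u) ξ(u) = λ(u) ξ(u) on Ω, and assume the system is linearly degenerate in this family: Dλ(u)[ξ(u)] = 0 for all u ∈ Ω. Then the focal point map F = r − λ·p is constant along the rarefaction curves: DF(u)[ξ(u)] = 0 for all u ∈ Ω. (Geometrically, the developable surfaces of this family are conical.) -/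
/-!
Differentiating `F = r - λ p` along `ξ` gives `Dr ξ - λ Dp ξ - (Dλ ξ) p`. The last term vanishes
by linear degeneracy. The flux relations say exactly `DA = DB ∘ Df` and `DM = DN ∘ Df`, so on the
eigenvector `ξ` they give `DA ξ = λ DB ξ` and `DM ξ = λ DN ξ`, i.e. `Dr ξ = λ Dp ξ`.
-/
section

variable {R ι : Type*} [CommSemiring R] [TopologicalSpace R] [Fintype ι] [DecidableEq ι]

theorem ContinuousLinearMap.apply_eq_sum_single_s12 (L : (ι → R) →L[R] R) (w : ι → R) :
    L w = ∑ k, L (Pi.single k 1) * w k := by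
  conv_lhs => rw [← Finset.univ_sum_single w]
  refine (map_sum L _ _).trans (Finset.sum_congr rfl fun k _ => ?_)
  rw [mul_comm, ← smul_eq_mul, ← map_smul, ← Pi.single_smul', smul_eq_mul, mul_one]

theorem ContinuousLinearMap.eq_comp_of_apply_single {LA LB : (ι → R) →L[R] R}
    {Lf : (ι → R) →L[R] (ι → R)}
    (h : ∀ i, LA (Pi.single i 1) = ∑ k, LB (Pi.single k 1) * Lf (Pi.single i 1) k) :
    LA = LB.comp Lf := by
  refine ContinuousLinearMap.coe_injective (LinearMap.pi_ext' fun i => LinearMap.ext_ring ?_)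
  simp [h, ← ContinuousLinearMap.apply_eq_sum_single_s12]

end

theorem fderiv_sub_smul_apply_eq_zero {𝕜 E F : Type*} [NontriviallyNormedField 𝕜]
    [NormedAddCommGroup E] [NormedSpace 𝕜 E] [NormedAddCommGroup F] [NormedSpace 𝕜 F]
    {r p : E → F} {c : E → 𝕜} {u v : E} (hr : DifferentiableAt 𝕜 r u)
    (hp : DifferentiableAt 𝕜 p u) (hc : DifferentiableAt 𝕜 c u)
    (hcv : fderiv 𝕜 c u v = 0) (hrv : fderiv 𝕜 r u v = c u • fderiv 𝕜 p u v) :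
    fderiv 𝕜 (fun x => r x - c x • p x) u v = 0 := by
  rw [fderiv_fun_sub hr (by fun_prop), fderiv_fun_smul hc hp]
  simp [hcv, hrv]

/-- Let `f, A, B, M, N` be `C¹` on the open set `Ω` with the
conservation-law relations, `p(u) = (1, u, B, N, 0)`, `r(u) = (0, f, A, M, 1)`.
Suppose `λ : Ω → ℝ` is `C¹`, `ξ` is a field of eigenvectors
(`Df(u)ξ(u) = λ(u)ξ(u)` on `Ω`), and the system is linearly degenerate in this
family: `Dλ(u)[ξ(u)] = 0` on `Ω`. Then the focal point map `F = r − λ·p` is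
constant along the rarefaction curves: `DF(u)[ξ(u)] = 0` for all `u ∈ Ω`.
(Geometrically, the developable surfaces of this family are conical.) -/
theorem stmt_12
    (n : ℕ) (Ω : Set (Fin n → ℝ)) (hΩ : IsOpen Ω)
    (f : (Fin n → ℝ) → (Fin n → ℝ))
    (A B M N : (Fin n → ℝ) → ℝ)
    (hf : ContDiffOn ℝ 1 f Ω) (hA : ContDiffOn ℝ 1 A Ω)
    (hB : ContDiffOn ℝ 1 B Ω) (hM : ContDiffOn ℝ 1 M Ω)
    (hN : ContDiffOn ℝ 1 N Ω)
    (hAB : ∀ u ∈ Ω, ∀ i : Fin n,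
      fderiv ℝ A u (Pi.single i 1) =
        ∑ k : Fin n, fderiv ℝ B u (Pi.single k 1) *
          fderiv ℝ (fun x => f x k) u (Pi.single i 1))
    (hMN : ∀ u ∈ Ω, ∀ i : Fin n,
      fderiv ℝ M u (Pi.single i 1) =
        ∑ k : Fin n, fderiv ℝ N u (Pi.single k 1) *
          fderiv ℝ (fun x => f x k) u (Pi.single i 1))
    (p r : (Fin n → ℝ) → ℝ × (Fin n → ℝ) × ℝ × ℝ × ℝ)
    (hp : ∀ u, p u = (1, u, B u, N u, 0))
    (hr : ∀ u, r u = (0, f u, A u, M u, 1))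
    (lam : (Fin n → ℝ) → ℝ) (ξ : (Fin n → ℝ) → (Fin n → ℝ))
    (hlam : ContDiffOn ℝ 1 lam Ω)
    (heig : ∀ u ∈ Ω, fderiv ℝ f u (ξ u) = lam u • ξ u)
    (hlindeg : ∀ u ∈ Ω, fderiv ℝ lam u (ξ u) = 0) :
    ∀ u ∈ Ω, fderiv ℝ (fun x => r x - lam x • p x) u (ξ u) = 0 := by
  intro u hu
  have hU := hΩ.mem_nhds hu
  have hfd := (hf.contDiffAt hU).differentiableAt one_ne_zero
  have hAd := (hA.contDiffAt hU).differentiableAt one_ne_zero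
  have hBd := (hB.contDiffAt hU).differentiableAt one_ne_zero
  have hMd := (hM.contDiffAt hU).differentiableAt one_ne_zero
  have hNd := (hN.contDiffAt hU).differentiableAt one_ne_zero
  have hlamd := (hlam.contDiffAt hU).differentiableAt one_ne_zero
  have hAB' : fderiv ℝ A u = (fderiv ℝ B u).comp (fderiv ℝ f u) :=
    ContinuousLinearMap.eq_comp_of_apply_single (by simpa [fderiv_apply hfd] using hAB u hu)
  have hMN' : fderiv ℝ M u = (fderiv ℝ N u).comp (fderiv ℝ f u) :=
    ContinuousLinearMap.eq_comp_of_apply_single (by simpa [fderiv_apply hfd] using hMN u hu)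
  obtain rfl : p = _ := funext hp
  obtain rfl : r = _ := funext hr
  refine fderiv_sub_smul_apply_eq_zero (by fun_prop) (by fun_prop) hlamd (hlindeg u hu) ?_
  simp (disch := fun_prop) [DifferentiableAt.fderiv_prodMk, hAB', hMN', heig u hu]
end

section
/- Define f : ℝ³ → ℝ³ by f¹(u) = ½(u₂u₃ − u₁u₂ − u₁u₃) and its cyclic permutations, and set a(u) = u₁ + u₂ + u₃, b(u) = −½(u₁u₂ + u₂u₃ + u₃u₁), c(u) = u₁u₂u₃, and F(u) = b(u)² − a(u)c(u). Then for every u ∈ ℝ³ and every i ∈ {1,2,3}: ∂F/∂uᵢ = Σ_k (∂c/∂u_k)(∂f^k/∂uᵢ). That is, σ₅ = c dx + (b² − ac) dt is a conservation law of the Hamiltonian system with flux f. -/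
/-!
The flux is linear in the gradient of the density: `f = M *ᵥ ∇c` for the symmetric matrix
`M = -½ [[-1,1,1],[1,-1,1],[1,1,-1]]`, and `F = ½ ⟨∇c, M ∇c⟩`. For any symmetric `M` and any
differentiable `g`, the product rule and symmetry give
`∂ᵢ ½ ⟨g, M g⟩ = ⟨g, M ∂ᵢ g⟩ = Σₖ gₖ ∂ᵢ (M g)ₖ`; take `g = ∇c`.
-/

open Finset Matrix

section QuadraticForm

variable {n : Type*} [Fintype n] {M : Matrix n n ℝ} {g : (n → ℝ) → n → ℝ} {u : n → ℝ}

theorem hasFDerivAt_mulVec (hg : DifferentiableAt ℝ g u) :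
    HasFDerivAt (fun x => M *ᵥ g x) (M.mulVecLin.toContinuousLinearMap.comp (fderiv ℝ g u)) u :=
  M.mulVecLin.toContinuousLinearMap.hasFDerivAt.comp u hg.hasFDerivAt

theorem fderiv_mulVec_apply (hg : DifferentiableAt ℝ g u) (k : n) (v : n → ℝ) :
    fderiv ℝ (fun x => (M *ᵥ g x) k) u v = (M *ᵥ fderiv ℝ g u v) k := by
  rw [fderiv_apply (hasFDerivAt_mulVec hg).differentiableAt, (hasFDerivAt_mulVec hg).fderiv]
  rfl

theorem fderiv_dotProduct_mulVec_self (hM : M.IsSymm) (hg : DifferentiableAt ℝ g u)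
    (v : n → ℝ) :
    fderiv ℝ (fun x => g x ⬝ᵥ M *ᵥ g x) u v = 2 * (g u ⬝ᵥ M *ᵥ fderiv ℝ g u v) := by
  have hg_apply (j : n) : DifferentiableAt ℝ (fun x => g x j) u := by fun_prop
  have hMg_apply (j : n) : DifferentiableAt ℝ (fun x => (M *ᵥ g x) j) u := by
    simp only [mulVec, dotProduct]; fun_prop
  change fderiv ℝ (fun x => ∑ j, g x j * (M *ᵥ g x) j) u v = _
  rw [fderiv_fun_sum fun j _ => (hg_apply j).fun_mul (hMg_apply j)]
  simp only [_root_.sum_apply, fderiv_fun_mul (hg_apply _) (hMg_apply _), _root_.add_apply,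
    _root_.smul_apply, smul_eq_mul, fderiv_mulVec_apply hg, fderiv_apply hg,
    ContinuousLinearMap.comp_apply, ContinuousLinearMap.proj_apply, sum_add_distrib]
  change g u ⬝ᵥ M *ᵥ fderiv ℝ g u v + (M *ᵥ g u) ⬝ᵥ fderiv ℝ g u v = _
  rw [dotProduct_mulVec (g u), ← mulVec_transpose, hM.eq]
  ring

theorem fderiv_half_dotProduct_mulVec_self (hM : M.IsSymm) (hg : DifferentiableAt ℝ g u)
    (v : n → ℝ) :
    fderiv ℝ (fun x => g x ⬝ᵥ M *ᵥ g x / 2) u v =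
      ∑ k, g u k * fderiv ℝ (fun x => (M *ᵥ g x) k) u v := by
  have hq : DifferentiableAt ℝ (fun x => g x ⬝ᵥ M *ᵥ g x) u := by
    simp only [mulVec, dotProduct]; fun_prop
  simp_rw [div_eq_mul_inv]
  rw [fderiv_mul_const hq, _root_.smul_apply, fderiv_dotProduct_mulVec_self hM hg,
    smul_eq_mul]
  simp_rw [fderiv_mulVec_apply hg]
  change _ = g u ⬝ᵥ M *ᵥ fderiv ℝ g u v
  ring

end QuadraticForm

theorem fderiv_prod_apply_single {ι : Type*} [Fintype ι] [DecidableEq ι] (u : ι → ℝ) (k : ι) :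
    fderiv ℝ (fun x : ι → ℝ => ∏ j, x j) u (Pi.single k 1) = ∏ j, Function.update u k 1 j := by
  rw [hasFDerivAt_finsetProd.fderiv, prod_update_of_mem (mem_univ k), one_mul]
  simp [Pi.single_apply, sdiff_singleton_eq_erase]

/-- For the Hamiltonian system on `ℝ³` with flux
`f¹ = ½(u₂u₃ − u₁u₂ − u₁u₃)` and cyclic permutations, setting
`a = u₁ + u₂ + u₃`, `b = −½(u₁u₂ + u₂u₃ + u₃u₁)`, `c = u₁u₂u₃`, and
`F = b² − ac`, one has `∂F/∂uᵢ = Σ_k (∂c/∂u_k)(∂f^k/∂uᵢ)` for every `u` and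
every `i`: that is, `σ₅ = c dx + (b² − ac) dt` is a conservation law of the
Hamiltonian system with flux `f`. -/
theorem stmt_14
    (f : (Fin 3 → ℝ) → (Fin 3 → ℝ))
    (hf : ∀ u : Fin 3 → ℝ, f u =
      ![(1 / 2) * (u 1 * u 2 - u 0 * u 1 - u 0 * u 2),
        (1 / 2) * (u 2 * u 0 - u 1 * u 2 - u 1 * u 0),
        (1 / 2) * (u 0 * u 1 - u 2 * u 0 - u 2 * u 1)])
    (a b c F : (Fin 3 → ℝ) → ℝ)
    (ha : ∀ u : Fin 3 → ℝ, a u = u 0 + u 1 + u 2)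
    (hb : ∀ u : Fin 3 → ℝ, b u = -(1 / 2) * (u 0 * u 1 + u 1 * u 2 + u 2 * u 0))
    (hc : ∀ u : Fin 3 → ℝ, c u = u 0 * u 1 * u 2)
    (hF : ∀ u : Fin 3 → ℝ, F u = (b u) ^ 2 - a u * c u) :
    ∀ u : Fin 3 → ℝ, ∀ i : Fin 3,
      fderiv ℝ F u (Pi.single i 1) =
        ∑ k : Fin 3, fderiv ℝ c u (Pi.single k 1) *
          fderiv ℝ (fun x => f x k) u (Pi.single i 1) := by
  intro u i
  set M : Matrix (Fin 3) (Fin 3) ℝ := -(1 / 2 : ℝ) • !![-1, 1, 1; 1, -1, 1; 1, 1, -1]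
  set gradc : (Fin 3 → ℝ) → Fin 3 → ℝ := fun x => ![x 1 * x 2, x 0 * x 2, x 0 * x 1]
  have hM : M.IsSymm := by
    ext j k; fin_cases j <;> fin_cases k <;> simp [M]
  have hgradc : DifferentiableAt ℝ gradc u :=
    .finCons (by fun_prop) (.finCons (by fun_prop) (.finCons (by fun_prop) (by fun_prop)))
  have hc_grad (k : Fin 3) : fderiv ℝ c u (Pi.single k 1) = gradc u k := by
    rw [show c = fun x => ∏ j, x j from funext fun x => by rw [hc, Fin.prod_univ_three],
      fderiv_prod_apply_single]
    fin_cases k <;> simp [gradc, Fin.prod_univ_three, Function.update_apply]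
  have hf_grad : f = fun x => M *ᵥ gradc x := by
    ext1 x
    rw [hf, smul_mulVec, cons_mulVec, cons_mulVec, cons_mulVec, empty_mulVec]
    simp only [gradc, vec3_dotProduct', smul_vec3, smul_eq_mul]
    refine vec3_eq ?_ ?_ ?_ <;> ring
  have hF_grad : F = fun x => gradc x ⬝ᵥ M *ᵥ gradc x / 2 := by
    ext1 x
    rw [hF, ha, hb, hc, smul_mulVec, cons_mulVec, cons_mulVec, cons_mulVec, empty_mulVec]
    simp only [gradc, vec3_dotProduct', smul_vec3, smul_eq_mul]
    ring
  rw [hF_grad, fderiv_half_dotProduct_mulVec_self hM hgradc, hf_grad]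
  simp_rw [hc_grad]
end

section
/- Let Ω ⊆ ℝⁿ be open, ε : {1,…,n} → {1, −1}, and let k : Ω → ℝⁿ, h : Ω → ℝ, m : Ω → ℝ be C¹. Define p(u) = (1, u¹, …, uⁿ, ½Σ_iεⁱ(uⁱ)², h(u), 0) and s(u) = (0, ε¹k₁(u), …, εⁿkₙ(u), Σᵢ kᵢ(u)uⁱ − h(u), m(u), 1) in ℝ^{n+4}, and equip ℝ^{n+4} with the bilinear form (X,Y) = Σᵢ εⁱ XᵢYᵢ − X₀Y_{n+1} − X_{n+1}Y₀ − X_{n+2}Y_{n+3} − X_{n+3}Y_{n+2}. If the Legendre condition holds, i.e., (s(u), Dp(u)[v]) = 0 for all u ∈ Ω and all v ∈ ℝⁿ, then kᵢ(u) = ∂h/∂uⁱ(u) for all i and u ∈ Ω: the family of lines spanned by p and s is the family of generators of the ruled hypersurface of the Hamiltonian system with Hamiltonian density h. -/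
open Finset

theorem fderiv_one_id_prod_zero_apply {E : Type*} [NormedAddCommGroup E] [NormedSpace ℝ E]
    {q h : E → ℝ} {u : E} (hq : DifferentiableAt ℝ q u) (hh : DifferentiableAt ℝ h u) (v : E) :
    fderiv ℝ (fun u => ((1 : ℝ), u, q u, h u, (0 : ℝ))) u v =
      (0, v, fderiv ℝ q u v, fderiv ℝ h u v, 0) := by
  have hderiv : HasFDerivAt (fun u => ((1 : ℝ), u, q u, h u, (0 : ℝ))) _ u :=
    (hasFDerivAt_const (1 : ℝ) u).prodMk ((hasFDerivAt_id u).prodMk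
      (hq.hasFDerivAt.prodMk (hh.hasFDerivAt.prodMk (hasFDerivAt_const (0 : ℝ) u))))
  rw [hderiv.fderiv]
  rfl

theorem formQ_legendre_pairing {n : ℕ} (ε k v : Fin n → ℝ) (a b c d : ℝ) :
    formQ n ε (0, fun i => ε i * k i, a, b, 1) (0, v, c, d, 0) =
      (∑ i, ε i ^ 2 * k i * v i) - d := by
  simp only [formQ, zero_mul, mul_zero, sub_zero, one_mul]
  congr 1
  exact sum_congr rfl fun i _ => by ring

theorem stmt_17_general
    (n : ℕ) (Ω : Set (Fin n → ℝ)) (hΩ : IsOpen Ω)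
    (ε : Fin n → ℝ) (hε : ∀ i, ε i = 1 ∨ ε i = -1)
    (k : (Fin n → ℝ) → (Fin n → ℝ)) (h m : (Fin n → ℝ) → ℝ)
    (hh : ContDiffOn ℝ 1 h Ω)
    (p s : (Fin n → ℝ) → ℝ × (Fin n → ℝ) × ℝ × ℝ × ℝ)
    (hp : ∀ u, p u =
      (1, u, (1 / 2) * ∑ i : Fin n, ε i * (u i) ^ 2, h u, 0))
    (hs : ∀ u, s u =
      (0, fun i => ε i * k u i, (∑ i : Fin n, k u i * u i) - h u, m u, 1))
    (hLegendre : ∀ u ∈ Ω, ∀ v : Fin n → ℝ,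
      formQ n ε (s u) (fderiv ℝ p u v) = 0) :
    ∀ u ∈ Ω, ∀ i : Fin n, k u i = fderiv ℝ h u (Pi.single i 1) := by
  intro u hu i
  have hdh : DifferentiableAt ℝ h u :=
    (hh.contDiffAt (hΩ.mem_nhds hu)).differentiableAt one_ne_zero
  have hdq : DifferentiableAt ℝ (fun u : Fin n → ℝ => (1 / 2) * ∑ i, ε i * u i ^ 2) u := by
    fun_prop
  have hε_sq : ∀ j, ε j ^ 2 = 1 := fun j => by rcases hε j with hj | hj <;> simp [hj]
  have hL := hLegendre u hu (Pi.single i 1)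
  rw [funext hp, fderiv_one_id_prod_zero_apply hdq hdh, hs u, formQ_legendre_pairing] at hL
  simp only [hε_sq, one_mul, Pi.single_apply, mul_ite, mul_one, mul_zero, sum_ite_eq',
    mem_univ, if_true] at hL
  linarith

/-- Let `k : Ω → ℝⁿ`, `h, m : Ω → ℝ` be `C¹` on the open set
`Ω`, and set `p(u) = (1, u, ½Σεⁱ(uⁱ)², h(u), 0)` and
`s(u) = (0, ε¹k₁(u), …, εⁿkₙ(u), Σᵢkᵢ(u)uⁱ − h(u), m(u), 1)`. If the Legendre
condition `(s(u), Dp(u)[v]) = 0` holds for all `u ∈ Ω` and all `v ∈ ℝⁿ`, then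
`kᵢ(u) = ∂h/∂uⁱ(u)` for all `i` and `u ∈ Ω`: the family of lines spanned by
`p` and `s` is the family of generators of the ruled hypersurface of the
Hamiltonian system with Hamiltonian density `h`. -/
theorem stmt_17
    (n : ℕ) (Ω : Set (Fin n → ℝ)) (hΩ : IsOpen Ω)
    (ε : Fin n → ℝ) (hε : ∀ i, ε i = 1 ∨ ε i = -1)
    (k : (Fin n → ℝ) → (Fin n → ℝ)) (h m : (Fin n → ℝ) → ℝ)
    (hk : ContDiffOn ℝ 1 k Ω) (hh : ContDiffOn ℝ 1 h Ω)
    (hm : ContDiffOn ℝ 1 m Ω)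
    (p s : (Fin n → ℝ) → ℝ × (Fin n → ℝ) × ℝ × ℝ × ℝ)
    (hp : ∀ u, p u =
      (1, u, (1 / 2) * ∑ i : Fin n, ε i * (u i) ^ 2, h u, 0))
    (hs : ∀ u, s u =
      (0, fun i => ε i * k u i, (∑ i : Fin n, k u i * u i) - h u, m u, 1))
    (hLegendre : ∀ u ∈ Ω, ∀ v : Fin n → ℝ,
      formQ n ε (s u) (fderiv ℝ p u v) = 0) :
    ∀ u ∈ Ω, ∀ i : Fin n, k u i = fderiv ℝ h u (Pi.single i 1) :=
  stmt_17_general n Ω hΩ ε hε k h m hh p s hp hs hLegendre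
end
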